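/- The function x ↦ x·∇G₁(x) (where ∇G₁ is the classical gradient of G₁ on ℝ² \ {0}) is integrable on ℝ², and its Fourier transform satisfies 𝓕[x·∇G₁](ξ) = −2 (4π²‖ξ‖² + 1)^{-1} 𝓕[G₁](ξ) for every ξ ∈ ℝ². -/

import Mathlib

/-!
With `s = ‖x‖²` we have `G_λ(x) = F(s)`, `F(s) = ∫₀^∞ (4πt)⁻¹ exp(-s/(4t) - λt) dt`, so
`x·∇G_λ(x) = 2s F'(s) = -(s/8π) ∫₀^∞ t⁻² exp(-s/(4t) - λt) dt`. The substitution `t ↦ s/(4λt)`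
preserves the exponent and turns this into `-(λ/2π) ∫₀^∞ exp(-s/(4t) - λt) dt`. Both `G_λ` and
`x·∇G_λ` are thus superpositions `∫₀^∞ φ(t) exp(-‖x‖²/(4t) - λt) dt` of Gaussians, whose Fourier
transform is, by Fubini, `∫₀^∞ 4πt φ(t) exp(-(4π²‖ξ‖² + λ)t) dt`: this is `(4π²‖ξ‖² + λ)⁻¹` for
`φ(t) = (4πt)⁻¹` and `4π (4π²‖ξ‖² + λ)⁻²` for `φ = 1`.
-/

open MeasureTheory

noncomputable section

/-- ℝ², i.e. two-dimensional Euclidean space. -/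
abbrev E2 := EuclideanSpace ℝ (Fin 2)

/-- The Green function `G_λ` of `-Δ + λ` on `ℝ²`, defined via the heat-kernel formula
`G_λ(x) = ∫₀^∞ (4πt)⁻¹ exp(-‖x‖²/(4t) - λt) dt`. -/
noncomputable def greenFn (l : ℝ) (x : E2) : ℝ :=
  ∫ t in Set.Ioi (0 : ℝ), (4 * Real.pi * t)⁻¹ * Real.exp (-‖x‖ ^ 2 / (4 * t) - l * t)

/-- The Fourier transform `𝓕[g](ξ) = ∫ e^{-2πi x·ξ} g(x) dx` of a real-valued function on ℝ². -/
noncomputable def fourierTf (g : E2 → ℝ) (ξ : E2) : ℂ :=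
  ∫ x : E2, Complex.exp (-2 * Real.pi * Complex.I * ((inner ℝ x ξ : ℝ) : ℂ)) * (g x : ℂ)

open Real Set Filter
open scoped FourierTransform

lemma inv_pow_mul_exp_neg_div_le {c t : ℝ} (hc : 0 < c) (ht : 0 < t) (k : ℕ) :
    t⁻¹ ^ k * exp (-(c / t)) ≤ k.factorial / c ^ k := by
  have hu := Real.pow_div_factorial_le_exp _ (div_pos hc ht).le k
  rw [div_le_iff₀ (by positivity)] at hu
  rw [le_div_iff₀ (by positivity), exp_neg]
  calc t⁻¹ ^ k * (exp (c / t))⁻¹ * c ^ k = (c / t) ^ k * (exp (c / t))⁻¹ := by ring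
    _ ≤ k.factorial := by rw [← div_eq_mul_inv, div_le_iff₀ (exp_pos _)]; linarith

lemma inv_pow_mul_exp_le {s c l t : ℝ} (hc : 0 < c) (hcs : c ≤ s) (ht : 0 < t) (k : ℕ) :
    t⁻¹ ^ k * exp (-s / (4 * t) - l * t) ≤ k.factorial / (c / 4) ^ k * exp (-l * t) := by
  have hsplit : exp (-s / (4 * t) - l * t) = exp (-(s / 4 / t)) * exp (-l * t) := by
    rw [← exp_add]; ring_nf
  have hmono : exp (-(s / 4 / t)) ≤ exp (-(c / 4 / t)) := by gcongr
  rw [hsplit, ← mul_assoc]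
  gcongr
  exact (mul_le_mul_of_nonneg_left hmono (by positivity)).trans
    (inv_pow_mul_exp_neg_div_le (by positivity) ht k)

lemma integrableOn_inv_pow_mul_exp {s l : ℝ} (hs : 0 < s) (hl : 0 < l) (k : ℕ) :
    IntegrableOn (fun t => t⁻¹ ^ k * exp (-s / (4 * t) - l * t)) (Ioi 0) := by
  refine ((exp_neg_integrableOn_Ioi 0 hl).const_mul (k.factorial / (s / 4) ^ k)).mono'
    (by fun_prop : Measurable _).aestronglyMeasurable
    (ae_restrict_of_forall_mem measurableSet_Ioi fun t (ht : 0 < t) => ?_)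
  rw [Real.norm_of_nonneg (by positivity)]
  exact inv_pow_mul_exp_le hs le_rfl ht k

lemma integrableOn_mul_exp_neg_mul {l : ℝ} (hl : 0 < l) :
    IntegrableOn (fun t => t * exp (-l * t)) (Ioi 0) := by
  simpa using integrableOn_rpow_mul_exp_neg_mul_rpow (s := 1) (p := 1) (by norm_num) one_pos hl

def greenProfile (l s : ℝ) : ℝ :=
  ∫ t in Ioi 0, (4 * π * t)⁻¹ * exp (-s / (4 * t) - l * t)

lemma hasDerivAt_greenProfile {l s : ℝ} (hl : 0 < l) (hs : 0 < s) :
    HasDerivAt (greenProfile l)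
      (-(16 * π)⁻¹ * ∫ t in Ioi 0, t⁻¹ ^ 2 * exp (-s / (4 * t) - l * t)) s := by
  rw [← integral_const_mul]
  have hball : ∀ r ∈ Metric.ball s (s / 2), s / 2 ≤ r := fun r hr => by
    rw [Real.ball_eq_Ioo] at hr; linarith [hr.1]
  refine (hasDerivAt_integral_of_dominated_loc_of_deriv_le
    (F' := fun r t => -(16 * π)⁻¹ * (t⁻¹ ^ 2 * exp (-r / (4 * t) - l * t)))
    (bound := fun t => (16 * π)⁻¹ * ((2 : ℕ).factorial / (s / 2 / 4) ^ 2 * exp (-l * t)))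
    (Metric.ball_mem_nhds s (half_pos hs))
    (Eventually.of_forall fun r => (by fun_prop : Measurable _).aestronglyMeasurable)
    ?_ (by fun_prop : Measurable _).aestronglyMeasurable
    (ae_restrict_of_forall_mem measurableSet_Ioi fun t ht r hr => ?_)
    (((exp_neg_integrableOn_Ioi 0 hl).const_mul _).const_mul _)
    (ae_restrict_of_forall_mem measurableSet_Ioi fun t ht r _ => ?_)).2
  · exact IntegrableOn.congr_fun ((integrableOn_inv_pow_mul_exp hs hl 1).const_mul (4 * π)⁻¹)
      (fun t _ => by simp only [mul_inv, pow_one]; ring) measurableSet_Ioi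
  · rw [norm_mul, norm_neg, Real.norm_of_nonneg (by positivity),
      Real.norm_of_nonneg (by positivity)]
    exact mul_le_mul_of_nonneg_left (inv_pow_mul_exp_le (by positivity) (hball r hr) ht 2)
      (by positivity)
  · have ht : (t : ℝ) ≠ 0 := ht.ne'
    refine ((((hasDerivAt_neg r).div_const (4 * t)).sub_const (l * t)).exp.const_mul
      (4 * π * t)⁻¹).congr_deriv ?_
    field_simp
    ring

/-- The substitution `t ↦ s / (4 * l * t)` maps `s / (4 * t) + l * t` to itself. -/
lemma mul_integral_inv_sq_mul_exp {s l : ℝ} (hs : 0 < s) (hl : 0 < l) :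
    s / (4 * l) * ∫ t in Ioi 0, t⁻¹ ^ 2 * exp (-s / (4 * t) - l * t)
      = ∫ t in Ioi 0, exp (-s / (4 * t) - l * t) := by
  set c := s / (4 * l) with hc
  have hc0 : 0 < c := by positivity
  set g : ℝ → ℝ := fun t => exp (-s / (4 * t) - l * t)
  have hsubst := integral_comp_rpow_Ioi (fun y => g (c * y)) (p := -1) (by norm_num)
  rw [integral_comp_mul_left_Ioi g 0 hc0, mul_zero] at hsubst
  have hinv : ∀ x ∈ Ioi (0 : ℝ), (|(-1 : ℝ)| * x ^ ((-1 : ℝ) - 1)) • g (c * x ^ (-1 : ℝ))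
      = x⁻¹ ^ 2 * g x := fun x hx => by
    have hx : (x : ℝ) ≠ 0 := ne_of_gt hx
    rw [show (-1 : ℝ) - 1 = ((-2 : ℤ) : ℝ) by norm_num, rpow_intCast, rpow_neg_one, smul_eq_mul,
      abs_neg, abs_one, one_mul, zpow_neg, zpow_ofNat, ← inv_pow, hc]
    simp only [g]
    congr 2
    field_simp
    ring
  rw [setIntegral_congr_fun measurableSet_Ioi hinv, smul_eq_mul] at hsubst
  rw [hsubst, ← mul_assoc, mul_inv_cancel₀ hc0.ne', one_mul]

lemma fourierTf_congr_ae {f g : E2 → ℝ} (h : f =ᵐ[volume] g) (ξ : E2) :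
    fourierTf f ξ = fourierTf g ξ :=
  integral_congr_ae (h.mono fun x hx => by simp only [hx])

lemma fourierTf_const_mul (c : ℝ) (g : E2 → ℝ) (ξ : E2) :
    fourierTf (fun x => c * g x) ξ = c * fourierTf g ξ := by
  simp only [fourierTf, Complex.ofReal_mul, ← integral_const_mul]
  congr 1 with x
  ring

lemma fourierTf_eq_fourier (g : E2 → ℝ) (ξ : E2) :
    fourierTf g ξ = 𝓕 (fun x => (g x : ℂ)) ξ := by
  rw [fourierTf, Real.fourier_eq']
  congr 1 with x
  push_cast
  ring_nf

lemma fourierTf_gaussian {b : ℝ} (hb : 0 < b) (ξ : E2) :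
    fourierTf (fun x => exp (-b * ‖x‖ ^ 2)) ξ = ((π / b * exp (-π ^ 2 * ‖ξ‖ ^ 2 / b) : ℝ) : ℂ) := by
  rw [fourierTf_eq_fourier]
  have := fourier_gaussian_innerProductSpace (V := E2) (b := b) (by simpa using hb) ξ
  simp only [finrank_euclideanSpace_fin] at this
  push_cast
  convert this using 2
  norm_num

lemma integrable_exp_neg_mul_sq_norm {V : Type*} [NormedAddCommGroup V] [InnerProductSpace ℝ V]
    [FiniteDimensional ℝ V] [MeasurableSpace V] [BorelSpace V] {b : ℝ} (hb : 0 < b) :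
    Integrable (fun x : V => exp (-b * ‖x‖ ^ 2)) := by
  have := (GaussianFourier.integrable_cexp_neg_mul_sq_norm_add (V := V) (b := b)
    (by simpa using hb) 0 0).re
  refine this.congr (Eventually.of_forall fun x => ?_)
  simp only [zero_mul, add_zero]
  exact_mod_cast Complex.exp_ofReal_re _

def gaussianMixture (l : ℝ) (φ : ℝ → ℝ) (x : E2) : ℝ :=
  ∫ t in Ioi 0, φ t * exp (-‖x‖ ^ 2 / (4 * t) - l * t)

lemma gaussianMixture_integrand_eq (l : ℝ) (φ : ℝ → ℝ) {t : ℝ} (ht : t ≠ 0) (x : E2) :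
    φ t * exp (-‖x‖ ^ 2 / (4 * t) - l * t) = φ t * exp (-l * t) * exp (-(4 * t)⁻¹ * ‖x‖ ^ 2) := by
  rw [mul_assoc, ← exp_add]
  congr 2
  field_simp
  ring

lemma integrable_gaussianMixture_integrand {l : ℝ} {φ : ℝ → ℝ} (hφm : Measurable φ)
    (hφ : IntegrableOn (fun t => φ t * t * exp (-l * t)) (Ioi 0)) :
    Integrable (fun p : E2 × ℝ => φ p.2 * exp (-‖p.1‖ ^ 2 / (4 * p.2) - l * p.2))
      ((volume : Measure E2).prod (volume.restrict (Ioi 0))) := by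
  refine (integrable_prod_iff' (by fun_prop : Measurable _).aestronglyMeasurable).2 ⟨?_, ?_⟩
  · refine ae_restrict_of_forall_mem measurableSet_Ioi fun t (ht : 0 < t) => ?_
    simp_rw [gaussianMixture_integrand_eq l φ ht.ne']
    exact (integrable_exp_neg_mul_sq_norm (by positivity)).const_mul _
  · refine IntegrableOn.congr_fun (hφ.norm.const_mul (4 * π)) (fun t (ht : 0 < t) => ?_)
      measurableSet_Ioi
    simp_rw [gaussianMixture_integrand_eq l φ ht.ne', norm_mul, integral_const_mul,
      Real.norm_of_nonneg (exp_pos _).le, GaussianFourier.integral_rexp_neg_mul_sq_norm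
        (inv_pos.2 (by positivity : 0 < 4 * t)), finrank_euclideanSpace_fin]
    rw [Real.norm_of_nonneg ht.le]
    norm_num
    field_simp

lemma integrable_gaussianMixture {l : ℝ} {φ : ℝ → ℝ} (hφm : Measurable φ)
    (hφ : IntegrableOn (fun t => φ t * t * exp (-l * t)) (Ioi 0)) :
    Integrable (gaussianMixture l φ) :=
  (integrable_gaussianMixture_integrand hφm hφ).integral_prod_left

lemma fourierTf_gaussianMixture {l : ℝ} {φ : ℝ → ℝ} (hφm : Measurable φ)
    (hφ : IntegrableOn (fun t => φ t * t * exp (-l * t)) (Ioi 0)) (ξ : E2) :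
    fourierTf (gaussianMixture l φ) ξ
      = ((∫ t in Ioi 0, φ t * (4 * π * t) * exp (-(4 * π ^ 2 * ‖ξ‖ ^ 2 + l) * t) : ℝ) : ℂ) := by
  set e : E2 → ℂ := fun x => Complex.exp (-2 * π * Complex.I * ((inner ℝ x ξ : ℝ) : ℂ))
  have he : ∀ x, ‖e x‖ = 1 := fun x => by simp [e, Complex.norm_exp]
  have hint : Integrable
      (fun p : E2 × ℝ => e p.1 * ((φ p.2 * exp (-‖p.1‖ ^ 2 / (4 * p.2) - l * p.2) : ℝ) : ℂ))
      ((volume : Measure E2).prod (volume.restrict (Ioi 0))) :=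
    (integrable_gaussianMixture_integrand hφm hφ).ofReal.bdd_mul (c := 1)
      (by fun_prop : Continuous fun p : E2 × ℝ => e p.1).aestronglyMeasurable
      (Eventually.of_forall fun p => (he p.1).le)
  calc fourierTf (gaussianMixture l φ) ξ
      = ∫ x, ∫ t in Ioi 0, e x * ((φ t * exp (-‖x‖ ^ 2 / (4 * t) - l * t) : ℝ) : ℂ) := by
        simp only [fourierTf, gaussianMixture]
        congr 1 with x
        rw [integral_const_mul]
        exact congrArg (e x * ·) integral_ofReal.symm
    _ = ∫ t in Ioi 0, ∫ x, e x * ((φ t * exp (-‖x‖ ^ 2 / (4 * t) - l * t) : ℝ) : ℂ) :=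
        integral_integral_swap hint
    _ = ∫ t in Ioi 0, ((φ t * (4 * π * t) * exp (-(4 * π ^ 2 * ‖ξ‖ ^ 2 + l) * t) : ℝ) : ℂ) := by
        refine setIntegral_congr_fun measurableSet_Ioi fun t (ht : 0 < t) => ?_
        have hslice := fourierTf_const_mul (φ t * exp (-l * t))
          (fun x => exp (-(4 * t)⁻¹ * ‖x‖ ^ 2)) ξ
        simp only [← gaussianMixture_integrand_eq l φ ht.ne'] at hslice
        rw [fourierTf] at hslice
        rw [hslice, fourierTf_gaussian (by positivity), ← Complex.ofReal_mul]
        congr 1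
        have hexp : exp (-(4 * π ^ 2 * ‖ξ‖ ^ 2 + l) * t)
            = exp (-l * t) * exp (-π ^ 2 * ‖ξ‖ ^ 2 / (4 * t)⁻¹) := by
          rw [← exp_add]; congr 1; field_simp; ring
        rw [hexp]
        field_simp
    _ = _ := integral_ofReal

lemma fderiv_greenFn_apply_self {l : ℝ} (hl : 0 < l) {x : E2} (hx : x ≠ 0) :
    fderiv ℝ (greenFn l) x x = -(l / (2 * π)) * gaussianMixture l (fun _ => 1) x := by
  have hs : 0 < ‖x‖ ^ 2 := by positivity
  have hG : HasFDerivAt (greenProfile l ∘ fun y : E2 => ‖y‖ ^ 2) _ x :=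
    (hasDerivAt_greenProfile hl hs).comp_hasFDerivAt x (hasStrictFDerivAt_norm_sq x).hasFDerivAt
  rw [show greenFn l = greenProfile l ∘ fun y : E2 => ‖y‖ ^ 2 from rfl, hG.fderiv, gaussianMixture]
  simp only [smul_apply, innerSL_apply_apply, real_inner_self_eq_norm_sq, smul_eq_mul, one_mul]
  rw [← mul_integral_inv_sq_mul_exp hs hl]
  generalize ∫ t in Ioi 0, t⁻¹ ^ 2 * exp (-‖x‖ ^ 2 / (4 * t) - l * t) = K
  field_simp
  ring

lemma fderiv_greenFn_apply_self_ae {l : ℝ} (hl : 0 < l) :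
    (fun x => fderiv ℝ (greenFn l) x x) =ᵐ[volume]
      fun x => -(l / (2 * π)) * gaussianMixture l (fun _ => 1) x := by
  filter_upwards [volume.ae_ne 0] with x hx using fderiv_greenFn_apply_self hl hx

lemma fourierTf_greenFn {l : ℝ} (hl : 0 < l) (ξ : E2) :
    fourierTf (greenFn l) ξ = ((4 * π ^ 2 * ‖ξ‖ ^ 2 + l)⁻¹ : ℝ) := by
  have hφ : IntegrableOn (fun t => (4 * π * t)⁻¹ * t * exp (-l * t)) (Ioi 0) :=
    IntegrableOn.congr_fun ((exp_neg_integrableOn_Ioi 0 hl).const_mul (4 * π)⁻¹)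
      (fun t (ht : 0 < t) => by field_simp) measurableSet_Ioi
  have ha : 0 < 4 * π ^ 2 * ‖ξ‖ ^ 2 + l := by positivity
  have h := integral_rpow_mul_exp_neg_mul_Ioi one_pos ha
  simp only [sub_self, rpow_zero, one_mul, rpow_one, Gamma_one, mul_one, one_div] at h
  rw [show greenFn l = gaussianMixture l (fun t => (4 * π * t)⁻¹) from rfl,
    fourierTf_gaussianMixture (by fun_prop) hφ, ← h]
  congr 1
  refine setIntegral_congr_fun measurableSet_Ioi fun t (ht : 0 < t) => ?_
  field_simp

lemma fourierTf_gaussianMixture_one {l : ℝ} (hl : 0 < l) (ξ : E2) :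
    fourierTf (gaussianMixture l (fun _ => 1)) ξ
      = ((4 * π / (4 * π ^ 2 * ‖ξ‖ ^ 2 + l) ^ 2 : ℝ) : ℂ) := by
  have ha : 0 < 4 * π ^ 2 * ‖ξ‖ ^ 2 + l := by positivity
  have h := integral_rpow_mul_exp_neg_mul_Ioi two_pos ha
  norm_num [rpow_one, Gamma_two] at h
  rw [fourierTf_gaussianMixture measurable_const
    (by simpa only [one_mul] using integrableOn_mul_exp_neg_mul hl)]
  congr 1
  calc ∫ t in Ioi 0, 1 * (4 * π * t) * exp (-(4 * π ^ 2 * ‖ξ‖ ^ 2 + l) * t)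
      = 4 * π * ∫ t in Ioi 0, t * exp (-((4 * π ^ 2 * ‖ξ‖ ^ 2 + l) * t)) := by
        rw [← integral_const_mul]
        congr 1 with t
        ring_nf
    _ = 4 * π / (4 * π ^ 2 * ‖ξ‖ ^ 2 + l) ^ 2 := by rw [h, div_eq_mul_inv]

/-- The function `x ↦ x·∇G₁(x)` (the classical dilation derivative of `G₁` on `ℝ² \ {0}`)
is integrable on ℝ² and its Fourier transform satisfies
`𝓕[x·∇G₁](ξ) = -2 (4π²‖ξ‖² + 1)⁻¹ 𝓕[G₁](ξ)` for every `ξ ∈ ℝ²`. -/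
theorem fourier_dilation_deriv_green :
    Integrable (fun x : E2 => fderiv ℝ (greenFn 1) x x) ∧
      ∀ ξ : E2, fourierTf (fun x : E2 => fderiv ℝ (greenFn 1) x x) ξ
        = -2 * (((4 * Real.pi ^ 2 * ‖ξ‖ ^ 2 + 1 : ℝ) : ℂ))⁻¹ * fourierTf (greenFn 1) ξ := by
  have hae := fderiv_greenFn_apply_self_ae one_pos
  have hint := integrable_gaussianMixture (l := 1) (φ := fun _ => 1) measurable_const
    (by simpa only [one_mul] using integrableOn_mul_exp_neg_mul one_pos)
  refine ⟨(hint.const_mul _).congr hae.symm, fun ξ => ?_⟩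
  rw [fourierTf_congr_ae hae, fourierTf_const_mul, fourierTf_gaussianMixture_one one_pos,
    fourierTf_greenFn one_pos]
  push_cast
  field_simp
  ring
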